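/- (Theorem 1, closed-form Modified Cramér–von Mises Distance.) Let N ≥ 1, let y_1, …, y_M ∈ ℝ^N with weights w_1^y, …, w_M^y > 0 and let x_1, …, x_L ∈ ℝ^N with weights w_1^x, …, w_L^x > 0, and fix b_max > 0. Define the modified Cramér–von Mises distance D = ∫_0^{b_max} b^{-(N-1)} ∫_{ℝ^N} (F̃(m,b) - F(m,b))² dm db, where F̃(m,b) = Σ_{i=1}^M w_i^y · Π_{k=1}^N exp(-(y_i^{(k)} - m^{(k)})²/(2b²)) and F(m,b) = Σ_{i=1}^L w_i^x · Π_{k=1}^N exp(-(x_i^{(k)} - m^{(k)})²/(2b²)). Then D = Σ_{i=1}^M Σ_{j=1}^M w_i^y w_j^y γ(‖y_i - y_j‖²) - 2 Σ_{i=1}^L Σ_{j=1}^M w_i^x w_j^y γ(‖x_i - y_j‖²) + Σ_{i=1}^L Σ_{j=1}^L w_i^x w_j^x γ(‖x_i - x_j‖²), where for z > 0, γ(z) = (π^{N/2}/8) · (4 b_max² · exp(-z/(4 b_max²)) + z · Ei(-z/(4 b_max²))), and γ(0) = (π^{N/2}/2) · b_max² (its continuous extension). -/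

import Mathlib

open MeasureTheory Real

/-- `negEi z` is the exponential integral `Ei(-z)`, defined for `z > 0` by
`Ei(-z) = -∫_z^∞ (e^{-t}/t) dt`. -/
noncomputable def negEi (z : ℝ) : ℝ := -∫ t in Set.Ioi z, Real.exp (-t) / t

/-!
Expanding the square turns `D` into a signed double sum, over pairs `(p, q)` of Dirac components,
of `∫₀^bmax b^{-(N-1)} ∫ K(p - m, b) K(q - m, b) dm db`. Completing the square, the inner integral
is `(√π b)^N exp(-‖p - q‖² / (4b²))`, so the weight leaves `π^{N/2} ∫₀^bmax b exp(-z / (4b²)) db`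
with `z = ‖p - q‖²`. For `z > 0` the function `(b² exp(-z / (4b²)) + (z/4) Ei(-z / (4b²))) / 2`
is an antiderivative of the integrand (because `d/ds Ei(-s) = e^{-s} / s`) and tends to `0` as
`b → 0⁺`, which gives `γ(z)`; for `z = 0` the integral is `bmax² / 2`.
-/

open Set Filter Topology

lemma integrableOn_exp_neg_div_Ioi {z : ℝ} (hz : 0 < z) :
    IntegrableOn (fun t => exp (-t) / t) (Ioi z) := by
  refine ((exp_neg_integrableOn_Ioi z one_pos).const_mul z⁻¹).mono'
    (by fun_prop : Measurable fun t => exp (-t) / t).aestronglyMeasurable ?_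
  filter_upwards [ae_restrict_mem measurableSet_Ioi] with t (ht : z < t)
  rw [norm_div, norm_of_nonneg (exp_pos _).le, norm_of_nonneg (hz.trans ht).le, neg_one_mul,
    div_eq_inv_mul]
  gcongr

lemma negEi_eq_intervalIntegral_sub {s₀ s : ℝ} (hs₀ : 0 < s₀) (hs : s₀ ≤ s) :
    negEi s = (∫ t in s₀..s, exp (-t) / t) - ∫ t in Ioi s₀, exp (-t) / t := by
  have hsplit := setIntegral_union (Ioc_disjoint_Ioi le_rfl) measurableSet_Ioi
    ((integrableOn_exp_neg_div_Ioi hs₀).mono_set Ioc_subset_Ioi_self)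
    (integrableOn_exp_neg_div_Ioi (hs₀.trans_le hs))
  rw [Ioc_union_Ioi_eq_Ioi hs] at hsplit
  rw [negEi, intervalIntegral.integral_of_le hs, hsplit]
  ring

lemma hasDerivAt_negEi {s : ℝ} (hs : 0 < s) : HasDerivAt negEi (exp (-s) / s) s := by
  have hs₀ : 0 < s / 2 := by positivity
  have hint : IntervalIntegrable (fun t => exp (-t) / t) volume (s / 2) s :=
    (intervalIntegrable_iff_integrableOn_Ioc_of_le (by linarith)).2
      ((integrableOn_exp_neg_div_Ioi hs₀).mono_set Ioc_subset_Ioi_self)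
  have hcont : ContinuousAt (fun t => exp (-t) / t) s := by fun_prop (disch := positivity)
  have hmeas : StronglyMeasurableAtFilter (fun t => exp (-t) / t) (𝓝 s) :=
    (by fun_prop : Measurable fun t => exp (-t) / t).stronglyMeasurable.stronglyMeasurableAtFilter
  refine ((intervalIntegral.integral_hasDerivAt_right hint hmeas hcont).sub_const
    (∫ t in Ioi (s / 2), exp (-t) / t)).congr_of_eventuallyEq ?_
  filter_upwards [Ioi_mem_nhds (half_lt_self hs)] with u (hu : s / 2 < u)
  exact negEi_eq_intervalIntegral_sub hs₀ hu.le

lemma tendsto_negEi_atTop : Tendsto negEi atTop (𝓝 0) := by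
  have h := (intervalIntegral_tendsto_integral_Ioi 1 (integrableOn_exp_neg_div_Ioi one_pos)
    tendsto_id).sub_const (∫ t in Ioi (1 : ℝ), exp (-t) / t)
  rw [sub_self] at h
  refine h.congr' ?_
  filter_upwards [eventually_ge_atTop 1] with s hs
  exact (negEi_eq_intervalIntegral_sub one_pos hs).symm

lemma tendsto_div_four_mul_sq_nhdsGT_zero {z : ℝ} (hz : 0 < z) :
    Tendsto (fun b : ℝ => z / (4 * b ^ 2)) (𝓝[>] 0) atTop := by
  have hsq : Tendsto (fun b : ℝ => 4 * b ^ 2) (𝓝[>] 0) (𝓝[>] 0) := by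
    refine tendsto_nhdsWithin_of_tendsto_nhds_of_eventually_within _
      (((by fun_prop : Continuous fun b : ℝ => 4 * b ^ 2).tendsto' 0 0 (by simp)).mono_left
        nhdsWithin_le_nhds) ?_
    filter_upwards [self_mem_nhdsWithin] with b (hb : 0 < b)
    exact mem_Ioi.2 (by positivity)
  exact ((tendsto_inv_nhdsGT_zero.comp hsq).const_mul_atTop hz).congr fun b =>
    (div_eq_mul_inv _ _).symm

noncomputable def cvmPrimitive (z b : ℝ) : ℝ :=
  (b ^ 2 * exp (-z / (4 * b ^ 2)) + z / 4 * negEi (z / (4 * b ^ 2))) / 2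

lemma hasDerivAt_cvmPrimitive {z b : ℝ} (hz : 0 < z) (hb : 0 < b) :
    HasDerivAt (cvmPrimitive z) (b * exp (-z / (4 * b ^ 2))) b := by
  have hden : HasDerivAt (fun u : ℝ => 4 * u ^ 2) (4 * (2 * b)) b := by
    simpa using (hasDerivAt_pow 2 b).const_mul (4 : ℝ)
  have hden₀ : 4 * b ^ 2 ≠ 0 := by positivity
  have h := (((hasDerivAt_pow 2 b).mul ((hasDerivAt_const b (-z)).div hden hden₀).exp).add
    (((hasDerivAt_negEi (s := z / (4 * b ^ 2)) (by positivity)).comp b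
      ((hasDerivAt_const b z).div hden hden₀)).const_mul (z / 4))).div_const 2
  refine h.congr_deriv ?_
  simp only [Pi.div_apply, neg_div]
  field_simp
  ring

lemma tendsto_cvmPrimitive_nhdsGT_zero {z : ℝ} (hz : 0 < z) :
    Tendsto (cvmPrimitive z) (𝓝[>] 0) (𝓝 0) := by
  have hs := tendsto_div_four_mul_sq_nhdsGT_zero hz
  have hsq : Tendsto (fun b : ℝ => b ^ 2) (𝓝[>] 0) (𝓝 0) :=
    ((continuous_pow 2).tendsto' 0 0 (by simp)).mono_left nhdsWithin_le_nhds
  have hexp : Tendsto (fun b : ℝ => exp (-z / (4 * b ^ 2))) (𝓝[>] 0) (𝓝 0) :=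
    (tendsto_exp_neg_atTop_nhds_zero.comp hs).congr fun b => by
      rw [Function.comp_apply, neg_div]
  have h := ((hsq.mul hexp).add ((tendsto_negEi_atTop.comp hs).const_mul (z / 4))).div_const 2
  rwa [mul_zero, mul_zero, add_zero, zero_div] at h

lemma integrableOn_mul_exp_neg_div_sq {z : ℝ} (hz : 0 ≤ z) (bmax : ℝ) :
    IntegrableOn (fun b => b * exp (-z / (4 * b ^ 2))) (Ioc 0 bmax) := by
  refine Measure.integrableOn_of_bounded (M := bmax) measure_Ioc_lt_top.ne
    (by fun_prop : Measurable fun b : ℝ => b * exp (-z / (4 * b ^ 2))).aestronglyMeasurable ?_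
  filter_upwards [ae_restrict_mem measurableSet_Ioc] with b ⟨hb, hbmax⟩
  have hexp : exp (-z / (4 * b ^ 2)) ≤ 1 := exp_le_one_iff.2 (div_nonpos_of_nonpos_of_nonneg
    (neg_nonpos.2 hz) (by positivity))
  rw [norm_of_nonneg (by positivity)]
  nlinarith [exp_pos (-z / (4 * b ^ 2))]

lemma integral_Ioc_mul_exp_neg_div_sq {z bmax : ℝ} (hz : 0 < z) (hb : 0 < bmax) :
    ∫ b in Ioc 0 bmax, b * exp (-z / (4 * b ^ 2)) = cvmPrimitive z bmax := by
  rw [← intervalIntegral.integral_of_le hb.le,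
    intervalIntegral.integral_eq_sub_of_hasDerivAt_of_tendsto hb
      (fun b hb => hasDerivAt_cvmPrimitive hz hb.1)
      ((intervalIntegrable_iff_integrableOn_Ioc_of_le hb.le).2
        (integrableOn_mul_exp_neg_div_sq hz.le bmax))
      (tendsto_cvmPrimitive_nhdsGT_zero hz)
      ((hasDerivAt_cvmPrimitive hz hb).continuousAt.tendsto.mono_left nhdsWithin_le_nhds),
    sub_zero]

/-- The paper's `γ(z)`, before the `b`-integral is evaluated. -/
noncomputable def cvmGamma (N : ℕ) (bmax z : ℝ) : ℝ :=
  π ^ ((N : ℝ) / 2) * ∫ b in Ioc 0 bmax, b * exp (-z / (4 * b ^ 2))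

lemma cvmGamma_zero (N : ℕ) {bmax : ℝ} (hb : 0 ≤ bmax) :
    cvmGamma N bmax 0 = π ^ ((N : ℝ) / 2) / 2 * bmax ^ 2 := by
  simp only [cvmGamma, neg_zero, zero_div, exp_zero, mul_one]
  rw [← intervalIntegral.integral_of_le hb, integral_id]
  ring

lemma cvmGamma_of_pos (N : ℕ) {bmax z : ℝ} (hb : 0 < bmax) (hz : 0 < z) :
    cvmGamma N bmax z = π ^ ((N : ℝ) / 2) / 8 *
      (4 * bmax ^ 2 * exp (-z / (4 * bmax ^ 2)) + z * negEi (z / (4 * bmax ^ 2))) := by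
  rw [cvmGamma, integral_Ioc_mul_exp_neg_div_sq hz hb, cvmPrimitive]
  ring

lemma exp_gauss_mul_exp_gauss {b : ℝ} (hb : b ≠ 0) (a c m : ℝ) :
    exp (-(a - m) ^ 2 / (2 * b ^ 2)) * exp (-(c - m) ^ 2 / (2 * b ^ 2))
      = exp (-(a - c) ^ 2 / (4 * b ^ 2)) * exp (-(1 / b ^ 2) * (m - (a + c) / 2) ^ 2) := by
  rw [← exp_add, ← exp_add]
  congr 1
  field_simp
  ring

lemma integrable_exp_gauss_mul_exp_gauss {b : ℝ} (hb : b ≠ 0) (a c : ℝ) :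
    Integrable fun m => exp (-(a - m) ^ 2 / (2 * b ^ 2)) * exp (-(c - m) ^ 2 / (2 * b ^ 2)) := by
  simp_rw [exp_gauss_mul_exp_gauss hb a c]
  exact ((integrable_exp_neg_mul_sq (by positivity)).comp_sub_right ((a + c) / 2)).const_mul _

lemma integral_exp_gauss_mul_exp_gauss {b : ℝ} (hb : 0 < b) (a c : ℝ) :
    ∫ m, exp (-(a - m) ^ 2 / (2 * b ^ 2)) * exp (-(c - m) ^ 2 / (2 * b ^ 2))
      = √π * b * exp (-(a - c) ^ 2 / (4 * b ^ 2)) := by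
  simp_rw [exp_gauss_mul_exp_gauss hb.ne' a c]
  rw [integral_const_mul, integral_sub_right_eq_self (fun m => exp (-(1 / b ^ 2) * m ^ 2)),
    integral_gaussian, div_div_eq_mul_div, div_one, sqrt_mul pi_pos.le, sqrt_sq hb.le]
  ring

section Mixture

variable {ι κ κ' : Type*} [Fintype ι] [Fintype κ] [Fintype κ'] {N : ℕ}

noncomputable def gaussKernel (b : ℝ) (p m : ι → ℝ) : ℝ :=
  ∏ k, exp (-(p k - m k) ^ 2 / (2 * b ^ 2))

lemma gaussKernel_mul_gaussKernel (b : ℝ) (p q m : ι → ℝ) :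
    gaussKernel b p m * gaussKernel b q m
      = ∏ k, exp (-(p k - m k) ^ 2 / (2 * b ^ 2)) * exp (-(q k - m k) ^ 2 / (2 * b ^ 2)) :=
  Finset.prod_mul_distrib.symm

lemma integrable_gaussKernel_mul_gaussKernel {b : ℝ} (hb : b ≠ 0) (p q : ι → ℝ) :
    Integrable fun m => gaussKernel b p m * gaussKernel b q m := by
  simp_rw [gaussKernel_mul_gaussKernel]
  exact Integrable.fintype_prod (f := fun k mk =>
    exp (-(p k - mk) ^ 2 / (2 * b ^ 2)) * exp (-(q k - mk) ^ 2 / (2 * b ^ 2)))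
      fun k => integrable_exp_gauss_mul_exp_gauss hb _ _

lemma integral_gaussKernel_mul_gaussKernel {b : ℝ} (hb : 0 < b) (p q : ι → ℝ) :
    ∫ m, gaussKernel b p m * gaussKernel b q m
      = (√π * b) ^ Fintype.card ι * exp (-(∑ k, (p k - q k) ^ 2) / (4 * b ^ 2)) := by
  simp_rw [gaussKernel_mul_gaussKernel]
  rw [volume_pi, integral_fintype_prod_eq_prod (f := fun k mk =>
    exp (-(p k - mk) ^ 2 / (2 * b ^ 2)) * exp (-(q k - mk) ^ 2 / (2 * b ^ 2)))]
  simp_rw [integral_exp_gauss_mul_exp_gauss hb, Finset.prod_mul_distrib, ← exp_sum,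
    ← Finset.sum_div, Finset.sum_neg_distrib, Finset.prod_const, Finset.card_univ, mul_pow]

/-- The LCD `F(m, b)` of the Dirac mixture `∑ i, w i • δ (p i)`. -/
noncomputable def lcd (w : κ → ℝ) (p : κ → ι → ℝ) (b : ℝ) (m : ι → ℝ) : ℝ :=
  ∑ i, w i * gaussKernel b (p i) m

lemma lcd_mul_lcd (u : κ → ℝ) (p : κ → ι → ℝ) (v : κ' → ℝ) (q : κ' → ι → ℝ) (b : ℝ)
    (m : ι → ℝ) :
    lcd u p b m * lcd v q b m
      = ∑ i, ∑ j, u i * v j * (gaussKernel b (p i) m * gaussKernel b (q j) m) := by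
  simp only [lcd, Finset.sum_mul_sum]
  exact Finset.sum_congr rfl fun i _ => Finset.sum_congr rfl fun j _ => by ring

lemma integrable_lcd_mul_lcd {b : ℝ} (hb : b ≠ 0) (u : κ → ℝ) (p : κ → ι → ℝ) (v : κ' → ℝ)
    (q : κ' → ι → ℝ) : Integrable fun m => lcd u p b m * lcd v q b m := by
  simp_rw [lcd_mul_lcd]
  exact integrable_finsetSum _ fun i _ => integrable_finsetSum _ fun j _ =>
    (integrable_gaussKernel_mul_gaussKernel hb _ _).const_mul _

lemma integral_lcd_mul_lcd {b : ℝ} (hb : 0 < b) (u : κ → ℝ) (p : κ → ι → ℝ) (v : κ' → ℝ)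
    (q : κ' → ι → ℝ) :
    ∫ m, lcd u p b m * lcd v q b m = ∑ i, ∑ j, u i * v j *
      ((√π * b) ^ Fintype.card ι * exp (-(∑ k, (p i k - q j k) ^ 2) / (4 * b ^ 2))) := by
  simp_rw [lcd_mul_lcd]
  rw [integral_finsetSum _ fun i _ => integrable_finsetSum _ fun j _ =>
    (integrable_gaussKernel_mul_gaussKernel hb.ne' _ _).const_mul _]
  refine Finset.sum_congr rfl fun i _ => ?_
  rw [integral_finsetSum _ fun j _ =>
    (integrable_gaussKernel_mul_gaussKernel hb.ne' _ _).const_mul _]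
  simp_rw [integral_const_mul, integral_gaussKernel_mul_gaussKernel hb]

lemma integral_lcd_sub_lcd_sq {b : ℝ} (hb : b ≠ 0) (u : κ → ℝ) (p : κ → ι → ℝ) (v : κ' → ℝ)
    (q : κ' → ι → ℝ) :
    ∫ m, (lcd u p b m - lcd v q b m) ^ 2 = (∫ m, lcd u p b m * lcd u p b m)
      - 2 * (∫ m, lcd v q b m * lcd u p b m) + ∫ m, lcd v q b m * lcd v q b m := by
  have hexpand : (fun m => (lcd u p b m - lcd v q b m) ^ 2) = fun m =>
      lcd u p b m * lcd u p b m - 2 * (lcd v q b m * lcd u p b m)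
        + lcd v q b m * lcd v q b m := funext fun m => by ring
  have huu := integrable_lcd_mul_lcd hb u p u p
  have hvu := (integrable_lcd_mul_lcd hb v q u p).const_mul 2
  rw [hexpand, integral_add (huu.sub' hvu) (integrable_lcd_mul_lcd hb v q v q),
    integral_sub huu hvu, integral_const_mul]

lemma one_div_pow_mul_integral_lcd_mul_lcd (hN : 1 ≤ N) {b : ℝ} (hb : 0 < b) (u : κ → ℝ)
    (p : κ → Fin N → ℝ) (v : κ' → ℝ) (q : κ' → Fin N → ℝ) :
    1 / b ^ (N - 1) * ∫ m, lcd u p b m * lcd v q b m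
      = π ^ ((N : ℝ) / 2) * ∑ i, ∑ j, u i * v j *
          (b * exp (-(∑ k, (p i k - q j k) ^ 2) / (4 * b ^ 2))) := by
  have hpow : b ^ N = b ^ (N - 1) * b := by rw [← pow_succ, Nat.sub_add_cancel hN]
  have hsqrt : √π ^ N = π ^ ((N : ℝ) / 2) := by
    rw [sqrt_eq_rpow, ← rpow_natCast, ← rpow_mul pi_pos.le, one_div_mul_eq_div]
  rw [integral_lcd_mul_lcd hb, Fintype.card_fin, mul_pow, hsqrt, hpow, Finset.mul_sum,
    Finset.mul_sum]
  refine Finset.sum_congr rfl fun i _ => ?_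
  rw [Finset.mul_sum, Finset.mul_sum]
  refine Finset.sum_congr rfl fun j _ => ?_
  field_simp

lemma integrableOn_one_div_pow_mul_integral_lcd_mul_lcd (hN : 1 ≤ N) (bmax : ℝ) (u : κ → ℝ)
    (p : κ → Fin N → ℝ) (v : κ' → ℝ) (q : κ' → Fin N → ℝ) :
    IntegrableOn (fun b => 1 / b ^ (N - 1) * ∫ m, lcd u p b m * lcd v q b m) (Ioc 0 bmax) := by
  refine IntegrableOn.congr_fun (Integrable.const_mul (integrable_finsetSum _ fun i _ =>
    integrable_finsetSum _ fun j _ => (integrableOn_mul_exp_neg_div_sq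
      (Finset.sum_nonneg fun k _ => sq_nonneg (p i k - q j k)) bmax).const_mul _) _)
    (fun b hb => (one_div_pow_mul_integral_lcd_mul_lcd hN hb.1 u p v q).symm) measurableSet_Ioc

lemma setIntegral_one_div_pow_mul_integral_lcd_mul_lcd (hN : 1 ≤ N) (bmax : ℝ) (u : κ → ℝ)
    (p : κ → Fin N → ℝ) (v : κ' → ℝ) (q : κ' → Fin N → ℝ) :
    ∫ b in Ioc 0 bmax, 1 / b ^ (N - 1) * ∫ m, lcd u p b m * lcd v q b m
      = ∑ i, ∑ j, u i * v j * cvmGamma N bmax (∑ k, (p i k - q j k) ^ 2) := by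
  rw [setIntegral_congr_fun measurableSet_Ioc
    fun b hb => one_div_pow_mul_integral_lcd_mul_lcd hN hb.1 u p v q, integral_const_mul,
    integral_finsetSum _ fun i _ => integrable_finsetSum _ fun j _ =>
      (integrableOn_mul_exp_neg_div_sq (Finset.sum_nonneg fun k _ => sq_nonneg _) bmax).const_mul _,
    Finset.mul_sum]
  refine Finset.sum_congr rfl fun i _ => ?_
  rw [integral_finsetSum _ fun j _ =>
      (integrableOn_mul_exp_neg_div_sq (Finset.sum_nonneg fun k _ => sq_nonneg _) bmax).const_mul _,
    Finset.mul_sum]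
  refine Finset.sum_congr rfl fun j _ => ?_
  rw [integral_const_mul, cvmGamma]
  ring

end Mixture

theorem modified_cramer_von_mises_closed_form_general
    (N M L : ℕ) (hN : 1 ≤ N)
    (y : Fin M → Fin N → ℝ) (wy : Fin M → ℝ)
    (x : Fin L → Fin N → ℝ) (wx : Fin L → ℝ)
    (bmax : ℝ) (hb : 0 < bmax)
    (γ : ℝ → ℝ)
    (hγ : ∀ z, γ z = if z = 0 then Real.pi ^ ((N : ℝ) / 2) / 2 * bmax ^ 2
        else Real.pi ^ ((N : ℝ) / 2) / 8 *
          (4 * bmax ^ 2 * Real.exp (-z / (4 * bmax ^ 2))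
            + z * negEi (z / (4 * bmax ^ 2)))) :
    (∫ b in Set.Ioc (0:ℝ) bmax, (1 / b ^ (N - 1)) *
        ∫ m : Fin N → ℝ,
          ((∑ i, wy i * ∏ k, Real.exp (-(y i k - m k) ^ 2 / (2 * b ^ 2)))
            - ∑ i, wx i * ∏ k, Real.exp (-(x i k - m k) ^ 2 / (2 * b ^ 2))) ^ 2)
      = ∑ i, ∑ j, wy i * wy j * γ (∑ k, (y i k - y j k) ^ 2)
        - 2 * ∑ i, ∑ j, wx i * wy j * γ (∑ k, (x i k - y j k) ^ 2)
        + ∑ i, ∑ j, wx i * wx j * γ (∑ k, (x i k - x j k) ^ 2) := by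
  have hγ_eq : ∀ p q : Fin N → ℝ,
      γ (∑ k, (p k - q k) ^ 2) = cvmGamma N bmax (∑ k, (p k - q k) ^ 2) := by
    intro p q
    rcases (Finset.sum_nonneg fun k _ => sq_nonneg (p k - q k)).eq_or_lt with h | h
    · rw [hγ, if_pos h.symm, ← h, cvmGamma_zero N hb.le]
    · rw [hγ, if_neg h.ne', cvmGamma_of_pos N hb h]
  have hsquare : ∀ b ∈ Ioc 0 bmax,
      1 / b ^ (N - 1) * ∫ m, (lcd wy y b m - lcd wx x b m) ^ 2
        = 1 / b ^ (N - 1) * (∫ m, lcd wy y b m * lcd wy y b m)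
          - 2 * (1 / b ^ (N - 1) * ∫ m, lcd wx x b m * lcd wy y b m)
          + 1 / b ^ (N - 1) * ∫ m, lcd wx x b m * lcd wx x b m := fun b hb => by
    rw [integral_lcd_sub_lcd_sq hb.1.ne']
    ring
  change ∫ b in Ioc 0 bmax, 1 / b ^ (N - 1) * ∫ m, (lcd wy y b m - lcd wx x b m) ^ 2 = _
  have hyy := integrableOn_one_div_pow_mul_integral_lcd_mul_lcd hN bmax wy y wy y
  have hxy := (integrableOn_one_div_pow_mul_integral_lcd_mul_lcd hN bmax wx x wy y).const_mul 2
  rw [setIntegral_congr_fun measurableSet_Ioc hsquare, integral_add (hyy.sub' hxy)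
      (integrableOn_one_div_pow_mul_integral_lcd_mul_lcd hN bmax wx x wx x),
    integral_sub hyy hxy, integral_const_mul]
  simp only [setIntegral_one_div_pow_mul_integral_lcd_mul_lcd hN, hγ_eq]

theorem modified_cramer_von_mises_closed_form
    (N M L : ℕ) (hN : 1 ≤ N)
    (y : Fin M → Fin N → ℝ) (wy : Fin M → ℝ) (hwy : ∀ i, 0 < wy i)
    (x : Fin L → Fin N → ℝ) (wx : Fin L → ℝ) (hwx : ∀ i, 0 < wx i)
    (bmax : ℝ) (hb : 0 < bmax)
    (γ : ℝ → ℝ)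
    (hγ : ∀ z, γ z = if z = 0 then Real.pi ^ ((N : ℝ) / 2) / 2 * bmax ^ 2
        else Real.pi ^ ((N : ℝ) / 2) / 8 *
          (4 * bmax ^ 2 * Real.exp (-z / (4 * bmax ^ 2))
            + z * negEi (z / (4 * bmax ^ 2)))) :
    (∫ b in Set.Ioc (0:ℝ) bmax, (1 / b ^ (N - 1)) *
        ∫ m : Fin N → ℝ,
          ((∑ i, wy i * ∏ k, Real.exp (-(y i k - m k) ^ 2 / (2 * b ^ 2)))
            - ∑ i, wx i * ∏ k, Real.exp (-(x i k - m k) ^ 2 / (2 * b ^ 2))) ^ 2)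
      = ∑ i, ∑ j, wy i * wy j * γ (∑ k, (y i k - y j k) ^ 2)
        - 2 * ∑ i, ∑ j, wx i * wy j * γ (∑ k, (x i k - y j k) ^ 2)
        + ∑ i, ∑ j, wx i * wx j * γ (∑ k, (x i k - x j k) ^ 2) :=
  modified_cramer_von_mises_closed_form_general N M L hN y wy x wx bmax hb γ hγ
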